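/- Let τ = (1 + √5)/2 be the golden ratio, c_τ = (1 + τ²)/τ³, and for n ∈ ℕ define b_n = c_τ n − 1/τ⁴ + (1/τ²)·frac((n+1)/τ²), where frac(x) denotes the fractional part of x. Then the sequence (b_n) of nonnegative τ-integers is quasiperiodic with exactly two possible adjacent gaps: for every n ∈ ℕ, b_{n+1} − b_n ∈ {1, 1/τ}. -/

import Mathlib

/-!
Writing `x = (n + 1)/τ²` and `δ = 1/τ²`, the gap `b_{n+1} − b_n` equals
`c_τ + δ (frac (x + δ) − frac x)`. Since `0 < δ < 1`, the fractional part either grows by `δ`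
or wraps around and drops by `1 − δ`, so the gap is `c_τ + δ²` or `c_τ + δ² − δ`.
The relation `τ² = τ + 1` turns these into `1` and `1/τ`.
-/

/-- The golden ratio `τ = (1 + √5)/2`. -/
noncomputable def τ : ℝ := (1 + Real.sqrt 5) / 2

/-- The constant `c_τ = (1 + τ²)/τ³`. -/
noncomputable def cτ : ℝ := (1 + τ ^ 2) / τ ^ 3

/-- The nonnegative τ-integers
`bₙ = c_τ n − 1/τ⁴ + (1/τ²)·frac((n+1)/τ²)`. -/
noncomputable def bseq (n : ℕ) : ℝ :=
  cτ * n - 1 / τ ^ 4 + (1 / τ ^ 2) * Int.fract ((n + 1) / τ ^ 2)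

open Real

theorem Int.fract_add_sub_fract_eq_or {R : Type*} [Ring R] [LinearOrder R] [IsStrictOrderedRing R]
    [FloorRing R] (x : R) {δ : R} (hδ₀ : 0 ≤ δ) (hδ₁ : δ ≤ 1) :
    Int.fract (x + δ) - Int.fract x = δ ∨ Int.fract (x + δ) - Int.fract x = δ - 1 := by
  have hlow : ⌊x⌋ ≤ ⌊x + δ⌋ := Int.floor_mono (le_add_of_nonneg_right hδ₀)
  have hhigh : ⌊x + δ⌋ ≤ ⌊x⌋ + 1 := by
    simpa only [Int.floor_add_one] using Int.floor_mono (add_le_add_right hδ₁ x)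
  rcases (show ⌊x + δ⌋ = ⌊x⌋ ∨ ⌊x + δ⌋ = ⌊x⌋ + 1 by omega) with h | h
  · left; rw [Int.fract, Int.fract, h]; abel
  · right; rw [Int.fract, Int.fract, h]; push_cast; abel

lemma tau_sq : τ ^ 2 = τ + 1 := goldenRatio_sq

lemma tau_pos : 0 < τ := goldenRatio_pos

lemma one_lt_tau_sq : 1 < τ ^ 2 := by linarith [tau_sq, tau_pos]

lemma cτ_add_inv_tau_pow_four : cτ + 1 / τ ^ 4 = 1 := by
  have := tau_pos.ne'
  unfold cτ
  field_simp
  linear_combination (-(τ ^ 2 + 1)) * tau_sq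

lemma one_sub_inv_tau_sq : 1 - 1 / τ ^ 2 = 1 / τ := by
  have := tau_pos.ne'
  field_simp
  linear_combination tau_sq

lemma bseq_succ_sub (n : ℕ) :
    bseq (n + 1) - bseq n = cτ + 1 / τ ^ 2 *
      (Int.fract ((n + 1) / τ ^ 2 + 1 / τ ^ 2) - Int.fract ((n + 1) / τ ^ 2)) := by
  unfold bseq
  push_cast
  rw [add_div _ 1 (τ ^ 2)]
  ring

/-- the sequence of nonnegative τ-integers is quasiperiodic with
exactly two possible adjacent gaps: for every `n`,
`b_{n+1} − bₙ ∈ {1, 1/τ}`. -/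
theorem stmt_18 :
    ∀ n : ℕ, bseq (n + 1) - bseq n = 1 ∨ bseq (n + 1) - bseq n = 1 / τ := by
  intro n
  have hδ₀ : (0 : ℝ) ≤ 1 / τ ^ 2 := by positivity
  have hδ₁ : 1 / τ ^ 2 ≤ 1 := (div_le_one (pow_pos tau_pos 2)).2 one_lt_tau_sq.le
  rw [bseq_succ_sub]
  rcases Int.fract_add_sub_fract_eq_or ((n + 1) / τ ^ 2) hδ₀ hδ₁ with h | h <;> rw [h]
  · left
    linear_combination cτ_add_inv_tau_pow_four
  · right
    linear_combination cτ_add_inv_tau_pow_four + one_sub_inv_tau_sq
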